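/- arXiv:math/0306318 — 3 statements merged into one kernel-verified Lean document; each statement's English description precedes it below -/
import Mathlib

section
/- Let P be a minimal prime ideal of I_mn(2). If the height-one rectangle {i}×{j,…,s} is a connected component of N_P, then for no t ≥ s+2 is {i}×{s+2,…,t} a connected component of N_P; that is, N_P has no two height-one components in the same row separated by exactly one column. Similarly, if the width-one rectangle {j,…,s}×{i} (positions (j,i),…,(s,i)) is a connected component of N_P, then for no t ≥ s+2 is {s+2,…,t}×{i} a connected component of N_P. -/
open MvPolynomial

/-- The ideal of adjacent 2×2 minors of the generic `m × n` matrix. -/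
noncomputable def adjMinors2Ideal (K : Type*) [Field K] (m n : ℕ) :
    Ideal (MvPolynomial (Fin m × Fin n) K) :=
  Ideal.span {f | ∃ (i j : ℕ) (hi : i + 1 < m) (hj : j + 1 < n),
    f = X (⟨i, by omega⟩, ⟨j, by omega⟩) * X (⟨i + 1, hi⟩, ⟨j + 1, hj⟩)
      - X (⟨i, by omega⟩, ⟨j + 1, hj⟩) * X (⟨i + 1, hi⟩, ⟨j, by omega⟩)}

/-- Two grid positions are adjacent if their coordinates differ by at most 1. -/
def gridAdj {m n : ℕ} (p q : Fin m × Fin n) : Prop :=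
  p.1.1 ≤ q.1.1 + 1 ∧ q.1.1 ≤ p.1.1 + 1 ∧ p.2.1 ≤ q.2.1 + 1 ∧ q.2.1 ≤ p.2.1 + 1

/-- A set of grid positions is connected if any two of its elements are joined by a
path inside the set whose consecutive positions are adjacent. -/
def ConnectedIn {m n : ℕ} (A : Set (Fin m × Fin n)) : Prop :=
  ∀ p ∈ A, ∀ q ∈ A,
    Relation.ReflTransGen (fun x y => gridAdj x y ∧ x ∈ A ∧ y ∈ A) p q

/-- `T` is a connected component of `N`: a maximal connected subset. -/
def IsComponent {m n : ℕ} (N T : Set (Fin m × Fin n)) : Prop :=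
  T.Nonempty ∧ T ⊆ N ∧ ConnectedIn T ∧
    ∀ T', T ⊆ T' → T' ⊆ N → ConnectedIn T' → T' = T

/-- A rectangle of grid positions. -/
def IsRect {m n : ℕ} (T : Set (Fin m × Fin n)) : Prop :=
  ∃ i s j t : ℕ,
    T = {p : Fin m × Fin n | i ≤ p.1.1 ∧ p.1.1 ≤ s ∧ j ≤ p.2.1 ∧ p.2.1 ≤ t}

/-- The boundary of a set of grid positions: positions outside of it that are
adjacent to some position in it. -/
def gridBdry {m n : ℕ} (T : Set (Fin m × Fin n)) : Set (Fin m × Fin n) :=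
  {p | p ∉ T ∧ ∃ q ∈ T, gridAdj p q}

/-- The set of positions whose variable lies in `P`. -/
def SP {K : Type*} [Field K] {m n : ℕ} (P : Ideal (MvPolynomial (Fin m × Fin n) K)) :
    Set (Fin m × Fin n) := {p | X p ∈ P}

/-- The set of positions whose variable does not lie in `P`. -/
def NP {K : Type*} [Field K] {m n : ℕ} (P : Ideal (MvPolynomial (Fin m × Fin n) K)) :
    Set (Fin m × Fin n) := {p | X p ∉ P}


/-!
If `x_w ∈ P` for a position `w` on a row or column `L`, and every neighbour of `w` off `L` is
also in `S_P`, send `x_w` to a new indeterminate and every other variable to its class mod `P`.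
Every adjacent minor is killed: either `w` is not a corner of its square, or each diagonal of the
square has a corner off `L`. The kernel is then a prime containing `I_mn(2)`, contained in `P`
and missing `x_w`, against the minimality of `P`. Two components in row `i` separated by the one
column `s + 1` force this situation at `w = (i, s + 1)`: `w` and its neighbours in the rows
`i ± 1` all border one of the two components, and the boundary of a component lies in `S_P`.
-/

section Grid

variable {m n : ℕ}

theorem gridAdj.symm {p q : Fin m × Fin n} (h : gridAdj p q) : gridAdj q p :=
  ⟨h.2.1, h.1, h.2.2.2, h.2.2.1⟩

theorem ConnectedIn.insert_of_gridAdj {A : Set (Fin m × Fin n)} (hA : ConnectedIn A)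
    {p q : Fin m × Fin n} (hp : p ∈ A) (hqp : gridAdj q p) : ConnectedIn (insert q A) := by
  have lift : ∀ x ∈ A, ∀ y ∈ A, Relation.ReflTransGen
      (fun x y => gridAdj x y ∧ x ∈ insert q A ∧ y ∈ insert q A) x y := fun x hx y hy =>
    Relation.ReflTransGen.mono (fun _ _ h => ⟨h.1, .inr h.2.1, .inr h.2.2⟩) _ _ (hA x hx y hy)
  rintro x (rfl | hx) y (rfl | hy)
  · exact .refl
  · exact (lift p hp y hy).head ⟨hqp, .inl rfl, .inr hp⟩
  · exact (lift x hx p hp).tail ⟨hqp.symm, .inr hp, .inl rfl⟩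
  · exact lift x hx y hy

theorem IsComponent.notMem_of_mem_gridBdry {N T : Set (Fin m × Fin n)} (hT : IsComponent N T)
    {q : Fin m × Fin n} (hq : q ∈ gridBdry T) : q ∉ N := by
  intro hqN
  obtain ⟨hqT, p, hp, hqp⟩ := hq
  have := hT.2.2.2 (insert q T) (Set.subset_insert q T) (Set.insert_subset hqN hT.2.1)
    (hT.2.2.1.insert_of_gridAdj hp hqp)
  exact hqT (this ▸ Set.mem_insert q T)

theorem IsComponent.gridBdry_subset_SP {K : Type*} [Field K]
    {P : Ideal (MvPolynomial (Fin m × Fin n) K)} {T : Set (Fin m × Fin n)}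
    (hT : IsComponent (NP P) T) : gridBdry T ⊆ SP P :=
  fun _ hq => not_not.mp (hT.notMem_of_mem_gridBdry hq)

end Grid

section ReduceExceptVar

variable {R σ : Type*} [CommRing R] [DecidableEq σ]

noncomputable def reduceExceptVar (P : Ideal (MvPolynomial σ R)) (w : σ) :
    MvPolynomial σ R →ₐ[R] Polynomial (MvPolynomial σ R ⧸ P) :=
  aeval fun q => if q = w then Polynomial.X else Polynomial.C (Ideal.Quotient.mk P (X q))

variable (P : Ideal (MvPolynomial σ R)) (w : σ)

@[simp]
theorem reduceExceptVar_X_self : reduceExceptVar P w (X w) = Polynomial.X := by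
  simp [reduceExceptVar]

theorem reduceExceptVar_X_of_ne {q : σ} (hq : q ≠ w) :
    reduceExceptVar P w (X q) = Polynomial.C (Ideal.Quotient.mk P (X q)) := by
  simp [reduceExceptVar, hq]

theorem ker_reduceExceptVar_le : RingHom.ker (reduceExceptVar P w) ≤ P := by
  have hcomp : ((Polynomial.aeval (Ideal.Quotient.mk P (X w))).restrictScalars R).comp
      (reduceExceptVar P w) = Ideal.Quotient.mkₐ R P := by
    refine MvPolynomial.algHom_ext fun q => ?_
    by_cases hq : q = w
    · subst hq
      simp
    · simp [reduceExceptVar_X_of_ne P w hq]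
  intro f hf
  rw [← Ideal.Quotient.eq_zero_iff_mem, ← Ideal.Quotient.mkₐ_eq_mk R, ← hcomp]
  simp [(RingHom.mem_ker).mp hf]

theorem X_notMem_of_le_ker_reduceExceptVar {I : Ideal (MvPolynomial σ R)}
    (hP : P ∈ I.minimalPrimes) (hI : I ≤ RingHom.ker (reduceExceptVar P w)) : X w ∉ P := by
  have := hP.1.1
  intro hw
  have hker : P ≤ RingHom.ker (reduceExceptVar P w) :=
    hP.2 ⟨RingHom.ker_isPrime _, hI⟩ (ker_reduceExceptVar_le P w)
  exact Polynomial.X_ne_zero (R := MvPolynomial σ R ⧸ P) (by simpa using hker hw)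

end ReduceExceptVar

section AdjacentMinors

variable {K : Type*} [Field K] {m n : ℕ}

theorem adjMinors2Ideal_le_ker_reduceExceptVar {P : Ideal (MvPolynomial (Fin m × Fin n) K)}
    (hIP : adjMinors2Ideal K m n ≤ P) {L : Set (Fin m × Fin n)}
    (hL : ∀ p ∈ L, ∀ q ∈ L, p.1 = q.1 ∨ p.2 = q.2) {w : Fin m × Fin n} (hw : w ∈ L)
    (hnb : ∀ q, gridAdj q w → q ∉ L → X q ∈ P) :
    adjMinors2Ideal K m n ≤ RingHom.ker (reduceExceptVar P w) := by
  rw [adjMinors2Ideal, Ideal.span_le]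
  rintro f ⟨a, b, ha, hb, rfl⟩
  rw [SetLike.mem_coe, RingHom.mem_ker]
  set sq : Set (Fin m × Fin n) := {p | a ≤ p.1.1 ∧ p.1.1 ≤ a + 1 ∧ b ≤ p.2.1 ∧ p.2.1 ≤ b + 1}
  by_cases hwsq : w ∈ sq
  · have hkill : ∀ r ∈ sq, r ∉ L → reduceExceptVar P w (X r) = 0 := fun r hr hrL => by
      rw [reduceExceptVar_X_of_ne P w (by rintro rfl; exact hrL hw), Polynomial.C_eq_zero,
        Ideal.Quotient.eq_zero_iff_mem]
      exact hnb r (by simp only [sq, Set.mem_ofPred_eq, gridAdj] at hr hwsq ⊢; omega) hrL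
    have hdiag : ∀ p ∈ sq, ∀ q ∈ sq, p.1 ≠ q.1 → p.2 ≠ q.2 →
        reduceExceptVar P w (X p * X q) = 0 := by
      intro p hp q hq hpq₁ hpq₂
      by_cases hpL : p ∈ L
      · have hqL : q ∉ L := fun hqL => (hL p hpL q hqL).elim hpq₁ hpq₂
        rw [map_mul, hkill q hq hqL, mul_zero]
      · rw [map_mul, hkill p hp hpL, zero_mul]
    rw [map_sub, hdiag _ (by simp [sq]) _ (by simp [sq]) (by simp) (by simp),
      hdiag _ (by simp [sq]) _ (by simp [sq]) (by simp) (by simp), sub_zero]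
  · have hfix : ∀ p ∈ sq, reduceExceptVar P w (X p) = Polynomial.C (Ideal.Quotient.mk P (X p)) :=
      fun p hp => reduceExceptVar_X_of_ne P w (by rintro rfl; exact hwsq hp)
    rw [map_sub, map_mul, map_mul, hfix _ (by simp [sq]), hfix _ (by simp [sq]),
      hfix _ (by simp [sq]), hfix _ (by simp [sq])]
    simp only [← map_mul, ← map_sub]
    rw [Ideal.Quotient.eq_zero_iff_mem.mpr (hIP (Ideal.subset_span ⟨a, b, ha, hb, rfl⟩)),
      map_zero]

theorem X_notMem_of_forall_gridAdj_notMem_line {P : Ideal (MvPolynomial (Fin m × Fin n) K)}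
    (hP : P ∈ (adjMinors2Ideal K m n).minimalPrimes) {L : Set (Fin m × Fin n)}
    (hL : ∀ p ∈ L, ∀ q ∈ L, p.1 = q.1 ∨ p.2 = q.2) {w : Fin m × Fin n} (hw : w ∈ L)
    (hnb : ∀ q, gridAdj q w → q ∉ L → X q ∈ P) : X w ∉ P :=
  X_notMem_of_le_ker_reduceExceptVar P w hP
    (adjMinors2Ideal_le_ker_reduceExceptVar hP.1.2 hL hw hnb)

theorem not_isComponent_of_flanking {P : Ideal (MvPolynomial (Fin m × Fin n) K)}
    (hP : P ∈ (adjMinors2Ideal K m n).minimalPrimes) {L T₁ T₂ : Set (Fin m × Fin n)}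
    (hL : ∀ p ∈ L, ∀ q ∈ L, p.1 = q.1 ∨ p.2 = q.2) (h₁ : IsComponent (NP P) T₁)
    (hT₁ : T₁ ⊆ L) (hT₂ : T₂ ⊆ L) {w a b : Fin m × Fin n} (hw : w ∈ L) (hwT₁ : w ∉ T₁)
    (ha : a ∈ T₁) (hb : b ∈ T₂) (hwa : gridAdj w a)
    (hcover : ∀ q, gridAdj q w → gridAdj q a ∨ gridAdj q b) :
    ¬ IsComponent (NP P) T₂ := by
  intro h₂
  have hwP : X w ∈ P := h₁.gridBdry_subset_SP ⟨hwT₁, a, ha, hwa⟩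
  refine X_notMem_of_forall_gridAdj_notMem_line hP hL hw (fun q hqw hqL => ?_) hwP
  rcases hcover q hqw with hqa | hqb
  · exact h₁.gridBdry_subset_SP ⟨fun h => hqL (hT₁ h), a, ha, hqa⟩
  · exact h₂.gridBdry_subset_SP ⟨fun h => hqL (hT₂ h), b, hb, hqb⟩

end AdjacentMinors

theorem no_two_thin_components_separated_by_one_general
    (K : Type*) [Field K] (m n : ℕ)
    (P : Ideal (MvPolynomial (Fin m × Fin n) K))
    (hP : P ∈ (adjMinors2Ideal K m n).minimalPrimes) :
    (∀ i j s t : ℕ,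
      IsComponent (NP P) {p : Fin m × Fin n | p.1.1 = i ∧ j ≤ p.2.1 ∧ p.2.1 ≤ s} →
      ¬ IsComponent (NP P) {p : Fin m × Fin n | p.1.1 = i ∧ s + 2 ≤ p.2.1 ∧ p.2.1 ≤ t}) ∧
    (∀ i j s t : ℕ,
      IsComponent (NP P) {p : Fin m × Fin n | p.2.1 = i ∧ j ≤ p.1.1 ∧ p.1.1 ≤ s} →
      ¬ IsComponent (NP P) {p : Fin m × Fin n | p.2.1 = i ∧ s + 2 ≤ p.1.1 ∧ p.1.1 ≤ t}) := by
  refine ⟨fun i j s t h₁ h₂ => ?_, fun i j s t h₁ h₂ => ?_⟩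
  · obtain ⟨⟨r, c⟩, rfl, hsc, hct⟩ := h₂.1
    obtain ⟨_, -, hj, hjs⟩ := h₁.1
    refine absurd h₂ <| not_isComponent_of_flanking hP (L := {p | p.1.1 = r.1})
      (fun p hp q hq => Or.inl (Fin.ext (hp.trans hq.symm))) h₁ (fun p hp => hp.1)
      (fun p hp => hp.1) (w := (r, ⟨s + 1, by omega⟩)) (a := (r, ⟨s, by omega⟩))
      (b := (r, ⟨s + 2, by omega⟩)) rfl (fun h => by simp at h) ⟨rfl, hj.trans hjs, le_rfl⟩
      ⟨rfl, le_rfl, hsc.trans hct⟩ (by dsimp only [gridAdj]; omega) (fun q hq => ?_)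
    dsimp only [gridAdj] at hq ⊢
    omega
  · obtain ⟨⟨r, c⟩, rfl, hsr, hrt⟩ := h₂.1
    obtain ⟨_, -, hj, hjs⟩ := h₁.1
    refine absurd h₂ <| not_isComponent_of_flanking hP (L := {p | p.2.1 = c.1})
      (fun p hp q hq => Or.inr (Fin.ext (hp.trans hq.symm))) h₁ (fun p hp => hp.1)
      (fun p hp => hp.1) (w := (⟨s + 1, by omega⟩, c)) (a := (⟨s, by omega⟩, c))
      (b := (⟨s + 2, by omega⟩, c)) rfl (fun h => by simp at h) ⟨rfl, hj.trans hjs, le_rfl⟩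
      ⟨rfl, le_rfl, hsr.trans hrt⟩ (by dsimp only [gridAdj]; omega) (fun q hq => ?_)
    dsimp only [gridAdj] at hq ⊢
    omega

/-- `N_P` has no two height-one components in the same row separated by
exactly one column, and no two width-one components in the same column separated by
exactly one row. -/
theorem no_two_thin_components_separated_by_one
    (K : Type*) [Field K] (m n : ℕ) (hm : 2 ≤ m) (hn : 2 ≤ n)
    (P : Ideal (MvPolynomial (Fin m × Fin n) K))
    (hP : P ∈ (adjMinors2Ideal K m n).minimalPrimes) :
    (∀ i j s t : ℕ,
      IsComponent (NP P) {p : Fin m × Fin n | p.1.1 = i ∧ j ≤ p.2.1 ∧ p.2.1 ≤ s} →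
      ¬ IsComponent (NP P) {p : Fin m × Fin n | p.1.1 = i ∧ s + 2 ≤ p.2.1 ∧ p.2.1 ≤ t}) ∧
    (∀ i j s t : ℕ,
      IsComponent (NP P) {p : Fin m × Fin n | p.2.1 = i ∧ j ≤ p.1.1 ∧ p.1.1 ≤ s} →
      ¬ IsComponent (NP P) {p : Fin m × Fin n | p.2.1 = i ∧ s + 2 ≤ p.1.1 ∧ p.1.1 ≤ t}) :=
  no_two_thin_components_separated_by_one_general K m n P hP
end

section
/- Let P be a minimal prime ideal of I_mn(2). Then every position in S_P belongs to the boundary of some connected component of N_P. -/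
open MvPolynomial

/-!
If `x_p ∈ P` but every neighbour of `p` also lies in `P`, replace `x_p` by a fresh indeterminate
and reduce everything else modulo `P`. Every adjacent minor still vanishes (it either has all
four corners in `P` or does not involve `x_p`), so the kernel is a prime containing `I_mn(2)`,
contained in `P` (substitute `x_p` back) and not containing `x_p`, against the minimality of `P`.
Hence `p` has a neighbour `q ∈ N_P`, and `p` lies on the boundary of the component of `q`.
-/

section Components

variable {m n : ℕ}

def stepIn (A : Set (Fin m × Fin n)) (x y : Fin m × Fin n) : Prop :=
  gridAdj x y ∧ x ∈ A ∧ y ∈ A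

def reachIn (N : Set (Fin m × Fin n)) (q : Fin m × Fin n) : Set (Fin m × Fin n) :=
  {r | Relation.ReflTransGen (stepIn N) q r}

instance (A : Set (Fin m × Fin n)) : Std.Symm (stepIn A) :=
  ⟨fun _ _ h => ⟨h.1.symm, h.2.2, h.2.1⟩⟩

variable {N : Set (Fin m × Fin n)} {q : Fin m × Fin n}

theorem reachIn_subset (hq : q ∈ N) : reachIn N q ⊆ N := by
  intro r hr
  induction hr with
  | refl => exact hq
  | tail _ hstep _ => exact hstep.2.2

theorem reflTransGen_stepIn_reachIn {r : Fin m × Fin n} (hr : r ∈ reachIn N q) :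
    Relation.ReflTransGen (stepIn (reachIn N q)) q r := by
  induction hr with
  | refl => exact .refl
  | tail hqs hstep ih => exact ih.tail ⟨hstep.1, hqs, hqs.tail hstep⟩

theorem connectedIn_reachIn : ConnectedIn (reachIn N q) := fun _ hr _ hs =>
  (Std.Symm.symm _ _ (reflTransGen_stepIn_reachIn hr)).trans (reflTransGen_stepIn_reachIn hs)

theorem isComponent_reachIn (hq : q ∈ N) : IsComponent N (reachIn N q) := by
  refine ⟨⟨q, .refl⟩, reachIn_subset hq, connectedIn_reachIn, ?_⟩
  intro T hT hTN hconn
  refine Set.Subset.antisymm (fun r hr => ?_) hT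
  exact Relation.ReflTransGen.mono (fun _ _ h => ⟨h.1, hTN h.2.1, hTN h.2.2⟩)
    _ _ (hconn q (hT .refl) r hr)

theorem exists_isComponent_mem (hq : q ∈ N) : ∃ T, IsComponent N T ∧ q ∈ T :=
  ⟨reachIn N q, isComponent_reachIn hq, .refl⟩

end Components

section FreeingVariable

variable {σ R : Type*} [DecidableEq σ] [CommRing R] (P : Ideal (MvPolynomial σ R)) (i : σ)

/-- Reduction modulo `P`, except that `X i` is sent to a fresh indeterminate. -/
noncomputable def modExcept : MvPolynomial σ R →ₐ[R] Polynomial (MvPolynomial σ R ⧸ P) :=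
  aeval (Function.update (fun j => Polynomial.C (Ideal.Quotient.mk P (X j))) i Polynomial.X)

@[simp]
theorem modExcept_X_self : modExcept P i (X i) = Polynomial.X := by
  simp [modExcept]

theorem modExcept_X_of_ne {j : σ} (hj : j ≠ i) :
    modExcept P i (X j) = Polynomial.C (Ideal.Quotient.mk P (X j)) := by
  simp [modExcept, hj]

theorem modExcept_X_eq_zero {j : σ} (hj : j ≠ i) (hjP : X j ∈ P) : modExcept P i (X j) = 0 := by
  rw [modExcept_X_of_ne P i hj, Ideal.Quotient.eq_zero_iff_mem.mpr hjP, map_zero]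

theorem aeval_modExcept (f : MvPolynomial σ R) :
    Polynomial.aeval (Ideal.Quotient.mk P (X i)) (modExcept P i f) = Ideal.Quotient.mk P f := by
  have : ((Polynomial.aeval (Ideal.Quotient.mk P (X i))).restrictScalars R).comp
      (modExcept P i) = Ideal.Quotient.mkₐ R P := by
    refine algHom_ext fun j => ?_
    rcases eq_or_ne j i with rfl | hj
    · simp
    · simp [modExcept_X_of_ne P i hj]
  exact DFunLike.congr_fun this f

theorem ker_modExcept_le : RingHom.ker (modExcept P i) ≤ P := fun f hf => by
  rw [← Ideal.Quotient.eq_zero_iff_mem, ← aeval_modExcept, RingHom.mem_ker.mp hf, map_zero]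

theorem isPrime_ker_modExcept [P.IsPrime] : (RingHom.ker (modExcept P i)).IsPrime :=
  RingHom.ker_isPrime _

theorem X_notMem_ker_modExcept [P.IsPrime] : X i ∉ RingHom.ker (modExcept P i) := by
  simp [Polynomial.X_ne_zero]

theorem not_le_ker_modExcept {I : Ideal (MvPolynomial σ R)} (hP : I.IsMinimalPrime P)
    (hi : X i ∈ P) : ¬ I ≤ RingHom.ker (modExcept P i) := fun hI => by
  have := hP.isPrime
  have hmin : Minimal (fun Q : Ideal _ => Q.IsPrime ∧ I ≤ Q) P := hP
  have hPker := hmin.le_of_le ⟨isPrime_ker_modExcept P i, hI⟩ (ker_modExcept_le P i)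
  exact X_notMem_ker_modExcept P i (hPker hi)

theorem binomial_mem_ker_modExcept {a b c d : σ} (had : a ≠ d) (hbc : b ≠ c)
    (hmem : X a * X d - X b * X c ∈ P)
    (hcorners : i = a ∨ i = b ∨ i = c ∨ i = d → X a ∈ P ∧ X b ∈ P ∧ X c ∈ P ∧ X d ∈ P) :
    X a * X d - X b * X c ∈ RingHom.ker (modExcept P i) := by
  rw [RingHom.mem_ker]
  by_cases hi : i = a ∨ i = b ∨ i = c ∨ i = d
  · obtain ⟨ha, hb, hc, hd⟩ := hcorners hi
    have hprod : ∀ u v, u ≠ v → X u ∈ P → X v ∈ P → modExcept P i (X u * X v) = 0 := by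
      intro u v huv hu hv
      rcases eq_or_ne u i with rfl | hu'
      · rw [map_mul, modExcept_X_eq_zero P u huv.symm hv, mul_zero]
      · rw [map_mul, modExcept_X_eq_zero P i hu' hu, zero_mul]
    rw [map_sub, hprod a d had ha hd, hprod b c hbc hb hc, sub_zero]
  · simp only [not_or] at hi
    obtain ⟨ha, hb, hc, hd⟩ := hi
    have hprod : ∀ u v, i ≠ u → i ≠ v →
        modExcept P i (X u * X v) = Polynomial.C (Ideal.Quotient.mk P (X u * X v)) := by
      intro u v hu hv
      simp only [map_mul, modExcept_X_of_ne P i hu.symm, modExcept_X_of_ne P i hv.symm]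
    rw [map_sub, hprod a d ha hd, hprod b c hb hc, ← map_sub, ← map_sub,
      Ideal.Quotient.eq_zero_iff_mem.mpr hmem, map_zero]

end FreeingVariable

section AdjacentMinors

variable {K : Type*} [Field K] {m n : ℕ} {P : Ideal (MvPolynomial (Fin m × Fin n) K)}

theorem adjMinors2Ideal_le_ker_modExcept (hIP : adjMinors2Ideal K m n ≤ P)
    {p : Fin m × Fin n} (hnbrs : ∀ q, gridAdj p q → X q ∈ P) :
    adjMinors2Ideal K m n ≤ RingHom.ker (modExcept P p) := by
  rw [adjMinors2Ideal, Ideal.span_le]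
  rintro f ⟨i, j, hi, hj, rfl⟩
  apply binomial_mem_ker_modExcept
  · simp [Prod.ext_iff]
  · simp [Prod.ext_iff]
  · exact hIP (Ideal.subset_span ⟨i, j, hi, hj, rfl⟩)
  · intro hcorner
    refine ⟨hnbrs _ ?_, hnbrs _ ?_, hnbrs _ ?_, hnbrs _ ?_⟩ <;>
      rcases hcorner with rfl | rfl | rfl | rfl <;> simp only [gridAdj] <;> omega

theorem exists_gridAdj_X_notMem (hP : (adjMinors2Ideal K m n).IsMinimalPrime P)
    {p : Fin m × Fin n} (hp : X p ∈ P) : ∃ q, gridAdj p q ∧ X q ∉ P := by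
  by_contra! hnbrs
  exact not_le_ker_modExcept P p hP hp (adjMinors2Ideal_le_ker_modExcept hP.le hnbrs)

end AdjacentMinors

theorem SP_subset_union_of_boundaries_general
    (K : Type*) [Field K] (m n : ℕ)
    (P : Ideal (MvPolynomial (Fin m × Fin n) K))
    (hP : P ∈ (adjMinors2Ideal K m n).minimalPrimes) :
    ∀ p ∈ SP P, ∃ T, IsComponent (NP P) T ∧ p ∈ gridBdry T := by
  intro p hp
  obtain ⟨q, hpq, hq⟩ := exists_gridAdj_X_notMem hP hp
  obtain ⟨T, hT, hqT⟩ := exists_isComponent_mem (N := NP P) hq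
  exact ⟨T, hT, fun hpT => hT.2.1 hpT hp, q, hqT, hpq⟩

/-- every position of `S_P` belongs to the boundary of some connected
component of `N_P`. -/
theorem SP_subset_union_of_boundaries
    (K : Type*) [Field K] (m n : ℕ) (hm : 2 ≤ m) (hn : 2 ≤ n)
    (P : Ideal (MvPolynomial (Fin m × Fin n) K))
    (hP : P ∈ (adjMinors2Ideal K m n).minimalPrimes) :
    ∀ p ∈ SP P, ∃ T, IsComponent (NP P) T ∧ p ∈ gridBdry T :=
  SP_subset_union_of_boundaries_general K m n P hP
end

section
/- If Γ and Γ' are distinct prime sequences for the parameters m, n, then P_Γ and P_{Γ'} are incomparable; in particular P_Γ is not contained in P_{Γ'}. -/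
/-!
Evaluate at the `0/1` matrix whose columns in a finite set `T` are distinct standard basis vectors
and whose other columns vanish: a minor vanishes there as soon as one of its columns lies outside
`T`, while any `k ≤ m` columns in `T` carry a `k × k` minor equal to `1`. Hence `P_Γ'` vanishes at
that point as soon as `T` meets every interval of `Γ'` in fewer than `m` columns and misses a
column of every overlap of `Γ'`, and it remains to find such a `T` carrying a generator of `P_Γ`.
If an overlap of `Γ` contains no overlap of `Γ'`, take `T` to be that overlap. If an interval of
`Γ`, cut down to the columns `1, …, n`, lies in no interval of `Γ'`, it contains a window of
`m + 1` columns that straddles an overlap of `Γ'` and lies in no interval of `Γ'`; take `T` to be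
that window minus one column of the overlap. If neither happens, then `Γ = Γ'`, by induction along
the intervals.
-/

open MvPolynomial

/-- The adjacent maximal minor of the generic `m × n` matrix starting at
(0-based) column `c`: the determinant of the `m × m` submatrix on columns
`c, c+1, …, c+m-1`. -/
noncomputable def adjMaxMinor (K : Type*) [Field K] (m n : ℕ) (c : ℕ) (hc : c + m ≤ n) :
    MvPolynomial (Fin m × Fin n) K :=
  (Matrix.of fun i j : Fin m =>
    X (i, (⟨c + j.1, by have := j.2; omega⟩ : Fin n))).det

/-- The ideal `I_mn(m)` generated by the `n - m + 1` adjacent maximal minors. -/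
noncomputable def adjMaxIdeal (K : Type*) [Field K] (m n : ℕ) :
    Ideal (MvPolynomial (Fin m × Fin n) K) :=
  Ideal.span {f | ∃ (c : ℕ) (hc : c + m ≤ n), f = adjMaxMinor K m n c hc}

/-- The set of `k × k` minors of the generic `m × n` matrix whose columns are taken
among the (1-based) column indices in `cols`. -/
def minorSet (K : Type*) [Field K] (m n k : ℕ) (cols : Set ℕ) :
    Set (MvPolynomial (Fin m × Fin n) K) :=
  {f | ∃ (r : Fin k → Fin m) (c : Fin k → Fin n),
    Function.Injective r ∧ Function.Injective c ∧ (∀ l, (c l).1 + 1 ∈ cols) ∧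
    f = (Matrix.of fun a b => X (r a, c b)).det}

/-- A prime sequence for the parameters `m`, `n`: a list of integer intervals
`[a_1,b_1], …, [a_k,b_k]` (recorded as pairs) covering `[0, n+1]`, each of width at
least `m` (i.e. containing more than `m` integers), with strictly increasing left and
right endpoints, consecutive intervals overlapping in at least `1` and at most `m - 1`
columns. -/
def IsPrimeSeq (m n : ℕ) (Γ : List (ℕ × ℕ)) : Prop :=
  ∃ h0 : 0 < Γ.length,
    (Γ[0]'h0).1 = 0 ∧
    (Γ[Γ.length - 1]'(by omega)).2 = n + 1 ∧
    (∀ i (hi : i < Γ.length), (Γ[i]'hi).1 + m ≤ (Γ[i]'hi).2) ∧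
    ∀ i (hi : i + 1 < Γ.length),
      (Γ[i]'(by omega)).1 < (Γ[i + 1]'hi).1 ∧
      (Γ[i]'(by omega)).2 < (Γ[i + 1]'hi).2 ∧
      (Γ[i + 1]'hi).1 ≤ (Γ[i]'(by omega)).2 ∧
      (Γ[i]'(by omega)).2 + 2 ≤ (Γ[i + 1]'hi).1 + m

/-- The ideal `P_Γ` attached to a prime sequence `Γ`: it is generated by the `m × m`
minors of the submatrices on the columns of each interval of `Γ`, together with the
maximal minors of the submatrices on the overlaps of consecutive intervals. -/
noncomputable def PGamma (K : Type*) [Field K] (m n : ℕ) (Γ : List (ℕ × ℕ)) :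
    Ideal (MvPolynomial (Fin m × Fin n) K) :=
  Ideal.span
    ({f | ∃ i < Γ.length,
        f ∈ minorSet K m n m {v | Γ[i]!.1 ≤ v ∧ v ≤ Γ[i]!.2}} ∪
     {f | ∃ i, i + 1 < Γ.length ∧
        f ∈ minorSet K m n (Γ[i]!.2 - Γ[i + 1]!.1 + 1)
          {v | Γ[i + 1]!.1 ≤ v ∧ v ≤ Γ[i]!.2}})


open Finset

def colRank (T : Finset ℕ) (x : ℕ) : ℕ := #{y ∈ T | y < x}

lemma colRank_lt_card {T : Finset ℕ} {x : ℕ} (hx : x ∈ T) : colRank T x < #T :=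
  card_lt_card (filter_ssubset.2 ⟨x, hx, lt_irrefl x⟩)

lemma colRank_strictMonoOn (T : Finset ℕ) : StrictMonoOn (colRank T) T := by
  intro x hx y _ hxy
  refine card_lt_card ((ssubset_iff_of_subset ?_).2 ⟨x, mem_filter.2 ⟨hx, hxy⟩, ?_⟩)
  · intro z hz
    rw [mem_filter] at hz ⊢
    exact ⟨hz.1, hz.2.trans hxy⟩
  · simp

/-- The point of `K^{m × n}` whose column `c` (counted from `1`) is the `colRank T c`-th
standard basis vector if `c ∈ T`, and zero otherwise. -/
def basisPoint (K : Type*) [Zero K] [One K] (m n : ℕ) (T : Finset ℕ) : Fin m × Fin n → K :=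
  fun x => if x.2.1 + 1 ∈ T ∧ x.1.1 = colRank T (x.2.1 + 1) then 1 else 0

section Evaluation

variable {K : Type*} [Field K] {m n k : ℕ} {cols : Set ℕ} {T : Finset ℕ}
  {f : MvPolynomial (Fin m × Fin n) K}

lemma aeval_basisPoint_eq_zero (hf : f ∈ minorSet K m n k cols)
    (hT : ∀ S : Finset ℕ, #S = k → (∀ c ∈ S, c ∈ cols) → ¬ S ⊆ T) :
    aeval (basisPoint K m n T) f = 0 := by
  obtain ⟨r, c, -, hc, hcols, rfl⟩ := hf
  have hinj : Function.Injective fun l => (c l : ℕ) + 1 :=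
    fun _ _ h => hc (Fin.ext (Nat.add_right_cancel h))
  obtain ⟨_, hlS, hlT⟩ := not_subset.1 <| hT (univ.image fun l => (c l : ℕ) + 1)
    (by rw [card_image_of_injective _ hinj, card_univ, Fintype.card_fin])
    (by simpa using hcols)
  obtain ⟨l, -, rfl⟩ := mem_image.1 hlS
  rw [AlgHom.map_det]
  exact Matrix.det_eq_zero_of_column_eq_zero l fun i => by simp [basisPoint, hlT]

lemma aeval_basisPoint_eq_zero_of_card_lt {a b : ℕ}
    (hf : f ∈ minorSet K m n m {v | a ≤ v ∧ v ≤ b}) (hT : #(T ∩ Icc a b) < m) :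
    aeval (basisPoint K m n T) f = 0 :=
  aeval_basisPoint_eq_zero hf fun _ hS hScols hST => hT.not_ge <| hS ▸ card_le_card
    fun c hc => mem_inter.2 ⟨hST hc, mem_Icc.2 (hScols c hc)⟩

lemma aeval_basisPoint_eq_zero_of_notMem {a b x : ℕ}
    (hf : f ∈ minorSet K m n (b - a + 1) {v | a ≤ v ∧ v ≤ b}) (hx : x ∈ Icc a b)
    (hxT : x ∉ T) : aeval (basisPoint K m n T) f = 0 := by
  refine aeval_basisPoint_eq_zero hf fun S hS hScols hST => hxT (hST ?_)
  have hSab : S ⊆ Icc a b := fun c hc => mem_Icc.2 (hScols c hc)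
  rwa [eq_of_subset_of_card_le hSab (by rw [Nat.card_Icc, hS]; omega)]

lemma exists_mem_minorSet_aeval_basisPoint_eq_one (hTn : ∀ x ∈ T, 1 ≤ x ∧ x ≤ n)
    (hTm : #T ≤ m) (hk : #T = k) (hTcols : ∀ x ∈ T, x ∈ cols) :
    ∃ f ∈ minorSet K m n k cols, aeval (basisPoint K m n T) f = 1 := by
  let e := T.orderIsoOfFin hk
  have he : ∀ a, (e a : ℕ) ∈ T := fun a => (e a).2
  let c : Fin k → Fin n := fun b => ⟨e b - 1, by have := hTn _ (he b); omega⟩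
  have hc : ∀ b, (c b : ℕ) + 1 = e b := fun b => by
    have := hTn _ (he b)
    show (e b : ℕ) - 1 + 1 = e b
    omega
  let r : Fin k → Fin m := fun a => ⟨colRank T (e a), (colRank_lt_card (he a)).trans_le hTm⟩
  have hr : ∀ a b, r a = r b ↔ a = b := fun a b => by
    simp only [r, Fin.mk.injEq, (colRank_strictMonoOn T).injOn.eq_iff (he a) (he b),
      Subtype.coe_inj, e.injective.eq_iff]
  refine ⟨_, ⟨r, c, fun a b h => (hr a b).1 h, fun a b h => ?_, fun l => ?_, rfl⟩, ?_⟩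
  · exact e.injective (Subtype.ext (by rw [← hc a, ← hc b, h]))
  · exact hc l ▸ hTcols _ (he l)
  · rw [AlgHom.map_det, ← Matrix.det_one (R := K) (n := Fin k)]
    congr 1
    ext a b
    simp only [AlgHom.mapMatrix_apply, Matrix.map_apply, Matrix.of_apply, aeval_X, basisPoint,
      hc, he, true_and, Matrix.one_apply]
    exact if_congr (Fin.ext_iff.symm.trans (hr a b)) rfl rfl

end Evaluation

def IsSparse (m k : ℕ) (a b : ℕ → ℕ) (T : Finset ℕ) : Prop :=
  (∀ i < k, #(T ∩ Icc (a i) (b i)) < m) ∧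
    ∀ j, j + 1 < k → ∃ x ∈ Icc (a (j + 1)) (b j), x ∉ T

section Separation

variable {K : Type*} [Field K] {m n : ℕ} {Γ Γ' : List (ℕ × ℕ)} {T : Finset ℕ}

lemma PGamma_le_ker_aeval_basisPoint (hT : IsSparse m Γ.length (Γ[·]!.1) (Γ[·]!.2) T) :
    PGamma K m n Γ ≤ RingHom.ker (aeval (basisPoint K m n T)) := by
  refine Ideal.span_le.2 ?_
  rintro f (⟨i, hi, hf⟩ | ⟨j, hj, hf⟩)
  · exact aeval_basisPoint_eq_zero_of_card_lt hf (hT.1 i hi)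
  · obtain ⟨x, hx, hxT⟩ := hT.2 j hj
    exact aeval_basisPoint_eq_zero_of_notMem hf hx hxT

lemma not_PGamma_le_of_isSparse {f : MvPolynomial (Fin m × Fin n) K} (hf : f ∈ PGamma K m n Γ)
    (hf1 : aeval (basisPoint K m n T) f = 1)
    (hT : IsSparse m Γ'.length (Γ'[·]!.1) (Γ'[·]!.2) T) :
    ¬ PGamma K m n Γ ≤ PGamma K m n Γ' :=
  fun hle => one_ne_zero (hf1 ▸ RingHom.mem_ker.1 (PGamma_le_ker_aeval_basisPoint hT (hle hf)))

end Separation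

structure IsPrimeChain (m n k : ℕ) (a b : ℕ → ℕ) : Prop where
  pos : 0 < k
  a_zero : a 0 = 0
  b_last : b (k - 1) = n + 1
  add_le : ∀ i < k, a i + m ≤ b i
  succ : ∀ i, i + 1 < k →
    a i < a (i + 1) ∧ b i < b (i + 1) ∧ a (i + 1) ≤ b i ∧ b i + 2 ≤ a (i + 1) + m

lemma IsPrimeSeq.isPrimeChain {m n : ℕ} {Γ : List (ℕ × ℕ)} (h : IsPrimeSeq m n Γ) :
    IsPrimeChain m n Γ.length (Γ[·]!.1) (Γ[·]!.2) := by
  obtain ⟨h0, hfirst, hlast, hwidth, hsucc⟩ := h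
  refine ⟨h0, ?_, ?_, fun i hi => ?_, fun i hi => ?_⟩
  · simp only [getElem!_pos Γ 0 h0]
    exact hfirst
  · simp only [getElem!_pos Γ (Γ.length - 1) (by omega)]
    exact hlast
  · simp only [getElem!_pos Γ i hi]
    exact hwidth i hi
  · simp only [getElem!_pos Γ i (by omega), getElem!_pos Γ (i + 1) hi]
    exact hsucc i hi

namespace IsPrimeChain

variable {m n k k' : ℕ} {a b a' b' : ℕ → ℕ} {i j p w₀ w₁ : ℕ}

lemma a_lt_a (N : IsPrimeChain m n k a b) (hij : i < j) (hj : j < k) : a i < a j := by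
  induction j, hij using Nat.le_induction with
  | base => exact (N.succ i hj).1
  | succ j _ ih => exact (ih (by omega)).trans (N.succ j hj).1

lemma b_lt_b (N : IsPrimeChain m n k a b) (hij : i < j) (hj : j < k) : b i < b j := by
  induction j, hij using Nat.le_induction with
  | base => exact (N.succ i hj).2.1
  | succ j _ ih => exact (ih (by omega)).trans (N.succ j hj).2.1

lemma a_le_a (N : IsPrimeChain m n k a b) (hij : i ≤ j) (hj : j < k) : a i ≤ a j :=
  hij.eq_or_lt.elim (fun h => h ▸ le_rfl) fun h => (N.a_lt_a h hj).le

lemma b_le_b (N : IsPrimeChain m n k a b) (hij : i ≤ j) (hj : j < k) : b i ≤ b j :=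
  hij.eq_or_lt.elim (fun h => h ▸ le_rfl) fun h => (N.b_lt_b h hj).le

lemma two_le_a (N : IsPrimeChain m n k a b) (hi : 0 < i) (hik : i < k) : 2 ≤ a i := by
  have := N.add_le 0 (by omega)
  have := (N.succ 0 (by omega)).2.2.2
  have := N.a_le_a (show 0 + 1 ≤ i by omega) hik
  have := N.a_zero
  omega

lemma b_add_two_le (N : IsPrimeChain m n k a b) (hi : i + 1 < k) : b i + 2 ≤ n + 1 := by
  have := N.add_le (i + 1) hi
  have := (N.succ i hi).2.2.2
  have := N.b_le_b (show i + 1 ≤ k - 1 by omega) (by omega)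
  have := N.b_last
  omega

lemma a_add_le (N : IsPrimeChain m n k a b) (hi : i < k) : a i + m ≤ n + 1 := by
  have := N.add_le i hi
  have := N.b_le_b (show i ≤ k - 1 by omega) (by omega)
  have := N.b_last
  omega

lemma eq_sub_one_of_le_b (N : IsPrimeChain m n k a b) (hi : i < k) (h : n ≤ b i) :
    i = k - 1 := by
  by_contra h'
  have := N.b_add_two_le (i := i) (by omega)
  omega

lemma b_eq_of_a_eq (N : IsPrimeChain m n k a b) (N' : IsPrimeChain m n k' a' b')
    (hint : ∀ p < k, ∃ i < k', a' i ≤ max (a p) 1 ∧ min (b p) n ≤ b' i)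
    (hov : ∀ p, p + 1 < k → ∃ l, l + 1 < k' ∧ a (p + 1) ≤ a' (l + 1) ∧ b' l ≤ b p)
    (hp : p < k) (hp' : p < k') (ha : a p = a' p) : b p = b' p := by
  obtain ⟨q, hq, hqa, hqb⟩ := hint p hp
  have hqp : q ≤ p := by
    by_contra! hpq
    have := N'.a_lt_a hpq hq
    have := N'.two_le_a (by omega : 0 < q) hq
    have : a p = 0 ∨ 2 ≤ a p := by
      rcases Nat.eq_zero_or_pos p with rfl | hp0
      · exact .inl N.a_zero
      · exact .inr (N.two_le_a hp0 hp)
    omega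
  have := N'.b_le_b hqp hp'
  by_cases hlast : p + 1 < k
  · have := N.b_add_two_le hlast
    obtain ⟨l, hl, hla, hlb⟩ := hov p hlast
    have hpl : p ≤ l := by
      by_contra! hlp
      have := N'.a_le_a (show l + 1 ≤ p by omega) hp'
      have := (N.succ p hlast).1
      omega
    have := N'.b_le_b hpl (by omega)
    omega
  · have hbp : b p = n + 1 := by rw [show p = k - 1 by omega]; exact N.b_last
    rw [hbp, N'.eq_sub_one_of_le_b hp' (by omega), N'.b_last]

lemma a_succ_eq_of_b_eq (N : IsPrimeChain m n k a b) (N' : IsPrimeChain m n k' a' b')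
    (hint : ∀ p < k, ∃ i < k', a' i ≤ max (a p) 1 ∧ min (b p) n ≤ b' i)
    (hov : ∀ p, p + 1 < k → ∃ l, l + 1 < k' ∧ a (p + 1) ≤ a' (l + 1) ∧ b' l ≤ b p)
    (hp : p + 1 < k) (hp' : p < k') (hb : b p = b' p) :
    p + 1 < k' ∧ a (p + 1) = a' (p + 1) := by
  have := N.b_add_two_le hp
  have hp1' : p + 1 < k' := by
    by_contra! h
    have := N'.b_last
    rw [show k' - 1 = p by omega] at this
    omega
  obtain ⟨l, hl, hla, hlb⟩ := hov p hp
  have hlp : l ≤ p := by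
    by_contra! h
    have := N'.b_lt_b h (by omega)
    omega
  have := N'.a_le_a (show l + 1 ≤ p + 1 by omega) hp1'
  obtain ⟨q, hq, hqa, hqb⟩ := hint (p + 1) hp
  rw [max_eq_left (by have := N.two_le_a (by omega : 0 < p + 1) hp; omega)] at hqa
  have hpq : p + 1 ≤ q := by
    by_contra! h
    have := N'.b_le_b (show q ≤ p by omega) hp'
    have := (N.succ p hp).2.1
    omega
  have := N'.a_le_a hpq hq
  exact ⟨hp1', by omega⟩

lemma eq_of_nested (N : IsPrimeChain m n k a b) (N' : IsPrimeChain m n k' a' b')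
    (hint : ∀ p < k, ∃ i < k', a' i ≤ max (a p) 1 ∧ min (b p) n ≤ b' i)
    (hov : ∀ p, p + 1 < k → ∃ l, l + 1 < k' ∧ a (p + 1) ≤ a' (l + 1) ∧ b' l ≤ b p) :
    k = k' ∧ ∀ i < k, a i = a' i ∧ b i = b' i := by
  have key : ∀ i < k, i < k' ∧ a i = a' i ∧ b i = b' i := by
    intro i hi
    induction i with
    | zero =>
      have ha : a 0 = a' 0 := N.a_zero.trans N'.a_zero.symm
      exact ⟨N'.pos, ha, N.b_eq_of_a_eq N' hint hov hi N'.pos ha⟩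
    | succ i ih =>
      obtain ⟨hi', -, hb⟩ := ih (by omega)
      obtain ⟨hi'', ha⟩ := N.a_succ_eq_of_b_eq N' hint hov hi hi' hb
      exact ⟨hi'', ha, N.b_eq_of_a_eq N' hint hov hi hi'' ha⟩
  obtain ⟨hk', -, hb⟩ := key (k - 1) (by have := N.pos; omega)
  have := N'.eq_sub_one_of_le_b hk' (by rw [← hb, N.b_last]; omega)
  exact ⟨by have := N.pos; omega, fun i hi => (key i hi).2⟩

lemma max_add_le_min (N : IsPrimeChain m n k a b) (N' : IsPrimeChain m n k' a' b') (hp : p < k)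
    (h : ∀ i < k', ¬ (a' i ≤ max (a p) 1 ∧ min (b p) n ≤ b' i)) :
    max (a p) 1 + m ≤ min (b p) n := by
  rcases Nat.eq_zero_or_pos p with rfl | hp0
  · have := h 0 N'.pos
    have := N'.add_le 0 N'.pos
    have := N'.a_zero
    have := N.a_zero
    omega
  · have := N.two_le_a hp0 hp
    by_cases hlast : p + 1 < k
    · have := N.b_add_two_le hlast
      have := N.add_le p hp
      omega
    · have hbp : b p = n + 1 := by rw [show p = k - 1 by omega]; exact N.b_last
      have := h (k' - 1) (by have := N'.pos; omega)
      have := N'.a_add_le (i := k' - 1) (by have := N'.pos; omega)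
      have := N'.b_last
      omega

lemma exists_crossing (N : IsPrimeChain m n k a b) (hw₁ : w₁ ≤ n)
    (h : ∀ i < k, ¬ (a i ≤ w₀ ∧ w₁ ≤ b i)) :
    ∃ l, l + 1 < k ∧ w₀ < a (l + 1) ∧ b l < w₁ := by
  classical
  have hex : ∃ i, i < k ∧ w₁ ≤ b i :=
    ⟨k - 1, by have := N.pos; omega, by rw [N.b_last]; omega⟩
  obtain ⟨hq, hqb⟩ := Nat.find_spec hex
  have hq0 : Nat.find hex ≠ 0 := fun h0 =>
    h 0 N.pos ⟨N.a_zero.trans_le (Nat.zero_le _), h0 ▸ hqb⟩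
  refine ⟨Nat.find hex - 1, by omega, ?_, ?_⟩
  · rw [Nat.sub_add_cancel (Nat.one_le_iff_ne_zero.2 hq0)]
    exact lt_of_not_ge fun ha => h _ hq ⟨ha, hqb⟩
  · exact lt_of_not_ge fun hb => Nat.find_min hex (by omega : Nat.find hex - 1 < Nat.find hex)
      ⟨by omega, hb⟩

lemma exists_sparse_window (N : IsPrimeChain m n k a b) (hw : w₀ + m ≤ w₁) (hw₁ : w₁ ≤ n)
    (h : ∀ i < k, ¬ (a i ≤ w₀ ∧ w₁ ≤ b i)) :
    ∃ T : Finset ℕ, #T = m ∧ (∀ x ∈ T, w₀ ≤ x ∧ x ≤ w₁) ∧ IsSparse m k a b T := by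
  obtain ⟨l, hl, hwa, hbw⟩ := N.exists_crossing hw₁ h
  have hov := N.succ l hl
  have := N.add_le l (by omega)
  have := N.add_le (l + 1) hl
  -- `[α, α + m] ⊆ [w₀, w₁]` contains `a (l + 1) - 1`, left of the intervals after the `l`-th,
  -- and `b l + 1`, right of the others.
  set α := max w₀ (b l + 1 - m)
  set T := (Icc α (α + m)).erase (a (l + 1))
  have hmemT : ∀ x, x ∈ T ↔ x ≠ a (l + 1) ∧ α ≤ x ∧ x ≤ α + m := by simp [T]
  have hcard : #T = m := by
    rw [card_erase_of_mem (mem_Icc.2 (by omega)), Nat.card_Icc]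
    omega
  refine ⟨T, hcard, fun x hx => by rw [hmemT] at hx; omega, fun i hi => ?_, fun j hj => ?_⟩
  · obtain ⟨x, hxT, hxi⟩ : ∃ x ∈ T, x ∉ Icc (a i) (b i) := by
      rcases Nat.lt_or_ge l i with hli | hil
      · have := N.a_le_a (show l + 1 ≤ i by omega) hi
        exact ⟨a (l + 1) - 1, by rw [hmemT]; omega, by rw [mem_Icc]; omega⟩
      · have := N.b_le_b hil (by omega)
        exact ⟨b l + 1, by rw [hmemT]; omega, by rw [mem_Icc]; omega⟩
    rw [← hcard]
    exact card_lt_card ((ssubset_iff_of_subset inter_subset_left).2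
      ⟨x, hxT, fun hx => hxi (mem_inter.1 hx).2⟩)
  · have := (N.succ j hj).2.2.1
    rcases lt_trichotomy j l with hjl | rfl | hlj
    · have := N.a_le_a (show j + 1 ≤ l by omega) (by omega)
      exact ⟨a (j + 1), mem_Icc.2 (by omega), by rw [hmemT]; omega⟩
    · exact ⟨a (j + 1), mem_Icc.2 (by omega), by rw [hmemT]; omega⟩
    · have := N.b_le_b (show l + 1 ≤ j by omega) (by omega)
      exact ⟨b j, mem_Icc.2 (by omega), by rw [hmemT]; omega⟩

end IsPrimeChain

section Incomparability

variable {K : Type*} [Field K] {m n : ℕ} {Γ Γ' : List (ℕ × ℕ)} {p : ℕ}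

lemma not_PGamma_le_of_overlap (hΓ : IsPrimeChain m n Γ.length (Γ[·]!.1) (Γ[·]!.2))
    (hΓ' : IsPrimeChain m n Γ'.length (Γ'[·]!.1) (Γ'[·]!.2)) (hp : p + 1 < Γ.length)
    (h : ∀ l, l + 1 < Γ'.length → ¬ (Γ[p + 1]!.1 ≤ Γ'[l + 1]!.1 ∧ Γ'[l]!.2 ≤ Γ[p]!.2)) :
    ¬ PGamma K m n Γ ≤ PGamma K m n Γ' := by
  have := hΓ.succ p hp
  have := hΓ.two_le_a (by omega : 0 < p + 1) hp
  have := hΓ.b_add_two_le hp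
  obtain ⟨f, hf, hf1⟩ := exists_mem_minorSet_aeval_basisPoint_eq_one (K := K) (m := m) (n := n)
    (k := Γ[p]!.2 - Γ[p + 1]!.1 + 1) (cols := {v | Γ[p + 1]!.1 ≤ v ∧ v ≤ Γ[p]!.2})
    (T := Icc Γ[p + 1]!.1 Γ[p]!.2) (fun x hx => by rw [mem_Icc] at hx; omega)
    (by rw [Nat.card_Icc]; omega) (by rw [Nat.card_Icc]; omega) (fun x hx => mem_Icc.1 hx)
  refine not_PGamma_le_of_isSparse (Ideal.subset_span (.inr ⟨p, hp, hf⟩)) hf1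
    ⟨fun i _ => (card_le_card inter_subset_left).trans_lt (by rw [Nat.card_Icc]; omega),
      fun l hl => ?_⟩
  have hov' := (hΓ'.succ l hl).2.2.1
  by_cases hleft : Γ[p + 1]!.1 ≤ Γ'[l + 1]!.1
  · have := h l hl
    exact ⟨Γ'[l]!.2, mem_Icc.2 ⟨hov', le_rfl⟩, by rw [mem_Icc]; omega⟩
  · exact ⟨Γ'[l + 1]!.1, mem_Icc.2 ⟨le_rfl, hov'⟩, by rw [mem_Icc]; omega⟩

lemma not_PGamma_le_of_interval (hΓ : IsPrimeChain m n Γ.length (Γ[·]!.1) (Γ[·]!.2))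
    (hΓ' : IsPrimeChain m n Γ'.length (Γ'[·]!.1) (Γ'[·]!.2)) (hp : p < Γ.length)
    (h : ∀ i < Γ'.length, ¬ (Γ'[i]!.1 ≤ max Γ[p]!.1 1 ∧ min Γ[p]!.2 n ≤ Γ'[i]!.2)) :
    ¬ PGamma K m n Γ ≤ PGamma K m n Γ' := by
  obtain ⟨T, hTm, hTw, hT⟩ :=
    hΓ'.exists_sparse_window (hΓ.max_add_le_min hΓ' hp h) (min_le_right _ _) h
  obtain ⟨f, hf, hf1⟩ := exists_mem_minorSet_aeval_basisPoint_eq_one (K := K) (n := n)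
    (cols := {v | Γ[p]!.1 ≤ v ∧ v ≤ Γ[p]!.2}) (fun x hx => by have := hTw x hx; omega)
    hTm.le hTm    (fun x hx => by have := hTw x hx; exact ⟨by omega, by omega⟩)
  exact not_PGamma_le_of_isSparse (Ideal.subset_span (.inl ⟨p, hp, hf⟩)) hf1 hT

lemma not_PGamma_le (hΓ : IsPrimeSeq m n Γ) (hΓ' : IsPrimeSeq m n Γ') (hne : Γ ≠ Γ') :
    ¬ PGamma K m n Γ ≤ PGamma K m n Γ' := by
  intro hle
  have N := hΓ.isPrimeChain
  have N' := hΓ'.isPrimeChain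
  obtain ⟨hlen, heq⟩ := N.eq_of_nested N'
    (fun p hp => by_contra fun h =>
      not_PGamma_le_of_interval N N' hp (fun i hi hi' => h ⟨i, hi, hi'⟩) hle)
    (fun p hp => by_contra fun h =>
      not_PGamma_le_of_overlap N N' hp (fun l hl hl' => h ⟨l, hl, hl'⟩) hle)
  refine hne (List.ext_getElem hlen fun i hi hi' => ?_)
  simpa [getElem!_pos Γ i hi, getElem!_pos Γ' i hi', Prod.ext_iff] using heq i hi

end Incomparability

theorem PGamma_incomparable_general
    (K : Type*) [Field K] (m n : ℕ)
    (Γ Γ' : List (ℕ × ℕ)) (hΓ : IsPrimeSeq m n Γ) (hΓ' : IsPrimeSeq m n Γ')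
    (hne : Γ ≠ Γ') :
    ¬ PGamma K m n Γ ≤ PGamma K m n Γ' ∧ ¬ PGamma K m n Γ' ≤ PGamma K m n Γ :=
  ⟨not_PGamma_le hΓ hΓ' hne, not_PGamma_le hΓ' hΓ hne.symm⟩

/-- distinct prime sequences give incomparable ideals; in particular
`P_Γ` is not contained in `P_{Γ'}`. -/
theorem PGamma_incomparable
    (K : Type*) [Field K] (m n : ℕ) (hm : 2 ≤ m) (hmn : m ≤ n)
    (Γ Γ' : List (ℕ × ℕ)) (hΓ : IsPrimeSeq m n Γ) (hΓ' : IsPrimeSeq m n Γ')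
    (hne : Γ ≠ Γ') :
    ¬ PGamma K m n Γ ≤ PGamma K m n Γ' ∧ ¬ PGamma K m n Γ' ≤ PGamma K m n Γ :=
  PGamma_incomparable_general K m n Γ Γ' hΓ hΓ' hne
end
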